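/- Let p be a prime and G a finite p-group of nilpotency class c that can be generated by d elements, and let t = min{r,s} where exp(G/[G,G]) = p^r and exp(Z(G)) = p^s. Then for every p-subgroup P of Aut(G), the exponent of P is at most p^{t²c − t + d − 1} if p > 2, and at most p^{t²c − t + 2d − 1} if p = 2. -/

import Mathlib

/-- `P(G)`: the subgroup `γ₂(G)·G^p` for odd `p`, and `γ₂(G)·G⁴` for `p = 2`, where `G^m` is the
subgroup generated by `m`-th powers. -/
def groupP (p : ℕ) (G : Type*) [Group G] : Subgroup G :=
  commutator G ⊔ Subgroup.closure {x : G | ∃ g : G, g ^ (if p = 2 then 4 else p) = x}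

/-- `Aut_N(G)`: the group of automorphisms `u` of `G` such that `x⁻¹ · u x ∈ N` for all `x`. -/
def autSub {G : Type*} [Group G] (N : Subgroup G) : Subgroup (G ≃* G) where
  carrier := {u : G ≃* G | ∀ x : G, x⁻¹ * u x ∈ N}
  one_mem' := by
    intro x
    simpa using N.one_mem
  mul_mem' := by
    intro u v hu hv x
    have h := N.mul_mem (hv x) (hu (v x))
    simpa [MulAut.mul_apply, mul_assoc] using h
  inv_mem' := by
    intro u hu x
    have h := N.inv_mem (hu (u⁻¹ x))
    have hx : u (u⁻¹ x) = x := by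
      simp [MulAut.inv_def]
    rw [hx] at h
    simpa [mul_inv_rev] using h


/-!
Write an automorphism as `v x = x * δ x`. If `δ` takes central values it is a homomorphism and
`v^[n] x = x * ∏_{i<n} (δ^[i] (δ x)) ^ C(n, i+1)`; as `p ^ (e - i) ∣ C(p ^ e, i + 1)`, we get
`v ^ p ^ e = 1` once `δ^[i] (δ x)` has order dividing `p ^ (e - i)` for every `i`.

Let `W = P(G)` and `t = min r s`. An automorphism `u` of `p`-power order acts unipotently on the
abelian group `G/W`, of exponent `p` (or `4`) and rank at most `d`; linear algebra over `𝔽_p` makes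
`(u - 1)^d` vanish on `G/W` (on its quotient by squares if `p = 2`), and the displacement formula
puts `u ^ p ^ (d - 1)` (`u ^ 2 ^ (2d - 1)`) into `Aut_W(G)`. For `v ∈ Aut_W(G)`, induction on the
class through `G/Z(G)` makes `v ^ p ^ (t(c - 1) - 1)` central; a central automorphism in `Aut_W(G)`
has `δ(W) ⊆ δ(G)^p` and `δ(G)^(p^t) = 1`, which costs one more factor `p ^ t` (and, when `G` is
abelian, `W ⊆ G^p` saves a factor `p`). Finally `tc - 1 ≤ t²c - t`.
-/

theorem Nat.Prime.pow_sub_dvd_choose_pow {p : ℕ} (hp : p.Prime) (e i : ℕ) :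
    p ^ (e - i) ∣ (p ^ e).choose (i + 1) := by
  rcases le_or_gt (i + 1) (p ^ e) with hi | hi
  · have hval := hp.emultiplicity_choose_prime_pow hi i.succ_ne_zero
    have hmult : multiplicity p (i + 1) ≤ i := by
      have := (Nat.lt_pow_self hp.one_lt (n := multiplicity p (i + 1))).trans_le
        (Nat.le_of_dvd i.succ_pos (pow_multiplicity_dvd p (i + 1)))
      omega
    exact pow_dvd_of_le_emultiplicity (by rw [hval]; exact_mod_cast by omega)
  · simp [Nat.choose_eq_zero_of_lt hi]

section BinomialProd

open Finset

variable {A : Type*} [CommMonoid A]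

/-- Multiplicative notation for `(((1 + g) ^ n - 1) / g) a = ∑_{i<n} C(n, i+1) • gⁱ a`. -/
def binomialProd (g : A →* A) (n : ℕ) (a : A) : A :=
  ∏ i ∈ range n, g^[i] a ^ n.choose (i + 1)

theorem binomialProd_succ (g : A →* A) (n : ℕ) (a : A) :
    binomialProd g (n + 1) a = binomialProd g n a * a * g (binomialProd g n a) := by
  simp only [binomialProd, Nat.choose_succ_succ, pow_add, prod_mul_distrib, map_prod, map_pow]
  rw [prod_range_succ' (fun i => g^[i] a ^ n.choose i), prod_range_succ]
  simp [Function.iterate_succ_apply', mul_comm, mul_left_comm, mul_assoc]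

theorem binomialProd_prime_pow_eq_one {p : ℕ} (hp : p.Prime) (g : A →* A) (e : ℕ) (a : A)
    (h : ∀ i, g^[i] a ^ p ^ (e - i) = 1) : binomialProd g (p ^ e) a = 1 :=
  prod_eq_one fun i _ => by
    obtain ⟨q, hq⟩ := hp.pow_sub_dvd_choose_pow e i
    rw [hq, pow_mul, h, one_pow]

theorem iterate_eq_one_of_binomialProd_eq_one {p : ℕ} (hp : p.Prime) (hA : ∀ b : A, b ^ p = 1)
    (g : A →* A) (m : ℕ) (a : A) (h : binomialProd g (p ^ m) a = 1) :
    g^[p ^ m - 1] a = 1 := by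
  have hpm : p ^ m - 1 < p ^ m := Nat.sub_one_lt (pow_pos hp.pos m).ne'
  rwa [binomialProd, prod_eq_single_of_mem _ (mem_range.mpr hpm),
    Nat.sub_one_add_one_eq_of_pos (pow_pos hp.pos m), Nat.choose_self, pow_one] at h
  intro i hi hne
  obtain ⟨q, hq⟩ := hp.dvd_choose_pow (n := m) i.succ_ne_zero (by have := mem_range.mp hi; omega)
  rw [hq, pow_mul, hA, one_pow]

theorem iterate_apply_eq_mul_binomialProd {M : Type*} [Monoid M] (ι : A →* M) (δ : M →* A)
    {w : M → M} (hw : ∀ x, w x = x * ι (δ x)) (n : ℕ) (x : M) :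
    w^[n] x = x * ι (binomialProd (δ.comp ι) n (δ x)) := by
  induction n with
  | zero => simp [binomialProd]
  | succ n ih =>
    rw [Function.iterate_succ_apply', ih, hw, binomialProd_succ]
    simp only [map_mul, MonoidHom.comp_apply, mul_assoc]

end BinomialProd

section GroupP

variable {G H : Type*} [Group G] [Group H] {p : ℕ}

theorem map_commutator_le (φ : G →* H) : (commutator G).map φ ≤ commutator H := by
  rw [map_commutator_eq]
  exact Subgroup.commutator_mono le_top le_top

theorem map_groupP_le (φ : G →* H) : (groupP p G).map φ ≤ groupP p H := by
  rw [groupP, groupP, Subgroup.map_sup, MonoidHom.map_closure]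
  refine sup_le_sup (map_commutator_le φ) (Subgroup.closure_mono ?_)
  rintro _ ⟨_, ⟨g, rfl⟩, rfl⟩
  exact ⟨φ g, (map_pow φ g _).symm⟩

instance groupP_characteristic : (groupP p G).Characteristic :=
  Subgroup.characteristic_iff_map_le.mpr fun φ => map_groupP_le φ.toMonoidHom

theorem exists_pow_of_mem_groupP {A : Type*} [CommGroup A] (φ : G →* A) {u : G}
    (hu : u ∈ groupP p G) : ∃ z, φ u = φ z ^ p := by
  suffices groupP p G ≤ ((MonoidHom.range φ).map (powMonoidHom p)).comap φ by
    obtain ⟨_, ⟨z, rfl⟩, hz⟩ := this hu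
    exact ⟨z, hz.symm⟩
  refine sup_le ((Abelianization.commutator_subset_ker φ).trans fun x hx => ?_) ?_
  · exact ⟨1, ⟨1, map_one φ⟩, by simpa using hx.symm⟩
  · rw [Subgroup.closure_le]
    rintro _ ⟨g, rfl⟩
    refine ⟨φ (if p = 2 then g ^ 2 else g), ⟨_, rfl⟩, ?_⟩
    split_ifs with hp2
    · simp [hp2, ← pow_mul]
    · simp

theorem pow_mem_commutator_quotient (N : Subgroup G) [N.Normal] {n : ℕ}
    (h : ∀ x : G, x ^ n ∈ commutator G) (y : G ⧸ N) : y ^ n ∈ commutator (G ⧸ N) := by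
  induction y using QuotientGroup.induction_on with | H x
  exact map_commutator_le (QuotientGroup.mk' N) ⟨_, h x, rfl⟩

end GroupP

namespace MulAut

variable {G : Type*} [Group G]

@[simp]
theorem coe_pow (v : G ≃* G) (n : ℕ) : ⇑(v ^ n) = (⇑v)^[n] := by
  induction n with
  | zero => rfl
  | succ n ih => rw [pow_succ, coe_mul, ih, Function.iterate_succ]

def quotient (N : Subgroup G) [N.Characteristic] : MulAut G →* MulAut (G ⧸ N) where
  toFun v := QuotientGroup.congr N N v (Subgroup.characteristic_iff_map_eq.mp ‹_› v)
  map_one' := by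
    ext x
    induction x using QuotientGroup.induction_on
    rfl
  map_mul' v w := by
    ext x
    induction x using QuotientGroup.induction_on
    rfl

@[simp]
theorem quotient_apply_mk (N : Subgroup G) [N.Characteristic] (v : G ≃* G) (x : G) :
    quotient N v x = (v x : G ⧸ N) :=
  rfl

theorem quotient_mem_autSub_groupP {p : ℕ} (N : Subgroup G) [N.Characteristic] {v : G ≃* G}
    (hv : v ∈ autSub (groupP p G)) : quotient N v ∈ autSub (groupP p (G ⧸ N)) := by
  intro y
  induction y using QuotientGroup.induction_on with | H x
  exact map_groupP_le (QuotientGroup.mk' N) ⟨_, hv x, rfl⟩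

end MulAut

theorem mem_autSub_iff_quotient_eq_one {G : Type*} [Group G] (N : Subgroup G) [N.Characteristic]
    (v : G ≃* G) : v ∈ autSub N ↔ MulAut.quotient N v = 1 := by
  rw [MulEquiv.ext_iff, QuotientGroup.mk_surjective.forall]
  refine forall_congr' fun x => ?_
  rw [MulAut.quotient_apply_mk, MulAut.one_apply, eq_comm, QuotientGroup.eq]

section Central

open Subgroup
open scoped IsMulCommutative commutatorElement

variable {G : Type*} [Group G] {p : ℕ}

def centralDisplacement (v : G ≃* G) (hv : v ∈ autSub (center G)) : G →* center G where
  toFun x := ⟨x⁻¹ * v x, hv x⟩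
  map_one' := by simp
  map_mul' x y := Subtype.ext <| by
    change (x * y)⁻¹ * v (x * y) = x⁻¹ * v x * (y⁻¹ * v y)
    calc (x * y)⁻¹ * v (x * y) = y⁻¹ * (x⁻¹ * v x) * v y := by rw [map_mul]; group
      _ = x⁻¹ * v x * (y⁻¹ * v y) := by rw [mem_center_iff.mp (hv x) y⁻¹, mul_assoc]

@[simp]
theorem coe_centralDisplacement (v : G ≃* G) (hv : v ∈ autSub (center G)) (x : G) :
    (centralDisplacement v hv x : G) = x⁻¹ * v x :=
  rfl

theorem pow_prime_pow_eq_one_of_displacement_pow_eq_one (hp : p.Prime) {v : G ≃* G}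
    (hW : v ∈ autSub (groupP p G)) (hZ : v ∈ autSub (center G)) {e : ℕ}
    (hexp : ∀ x, (x⁻¹ * v x) ^ p ^ e = 1) : v ^ p ^ e = 1 := by
  set δ := centralDisplacement v hZ
  have hiter : ∀ i x, ∃ y, (δ.comp (center G).subtype)^[i] (δ x) = δ y ^ p ^ i := by
    intro i
    induction i with
    | zero => exact fun x => ⟨x, by simp⟩
    | succ i ih =>
      intro x
      obtain ⟨y, hy⟩ := ih x
      obtain ⟨z, hz⟩ : ∃ z, δ (δ y) = δ z ^ p := exists_pow_of_mem_groupP δ (hW y)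
      refine ⟨z, ?_⟩
      rw [Function.iterate_succ_apply', hy, map_pow, MonoidHom.comp_apply, coe_subtype, hz,
        ← pow_mul, pow_succ']
  have hv : ∀ x, v x = x * (center G).subtype (δ x) := fun x => (mul_inv_cancel_left x (v x)).symm
  ext x
  rw [MulAut.coe_pow, iterate_apply_eq_mul_binomialProd _ _ hv,
    binomialProd_prime_pow_eq_one hp _ e _, map_one, mul_one, MulAut.one_apply]
  intro i
  obtain ⟨y, hy⟩ := hiter i x
  obtain ⟨q, hq⟩ : p ^ e ∣ p ^ i * p ^ (e - i) := by rw [← pow_add]; exact pow_dvd_pow p (by omega)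
  have hδ : δ y ^ p ^ e = 1 := Subtype.ext (by simpa [δ] using hexp y)
  rw [hy, ← pow_mul, hq, pow_mul, hδ, one_pow]

theorem pow_prime_pow_eq_one_of_mem_autSub_center (hp : p.Prime) {t : ℕ}
    (ht : (∀ x : G, x ^ p ^ t ∈ commutator G) ∨ ∀ z ∈ center G, z ^ p ^ t = 1) {v : G ≃* G}
    (hW : v ∈ autSub (groupP p G)) (hZ : v ∈ autSub (center G)) : v ^ p ^ t = 1 := by
  refine pow_prime_pow_eq_one_of_displacement_pow_eq_one hp hW hZ fun x => ?_
  rcases ht with h | h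
  · have := Abelianization.commutator_subset_ker (centralDisplacement v hZ) (h x)
    rw [MonoidHom.mem_ker, map_pow] at this
    simpa using congrArg Subtype.val this
  · exact h _ (hZ x)

theorem pow_prime_pow_pred_eq_one_of_isMulCommutative [IsMulCommutative G] (hp : p.Prime) {t : ℕ}
    (ht : (∀ x : G, x ^ p ^ t ∈ commutator G) ∨ ∀ z ∈ center G, z ^ p ^ t = 1) {v : G ≃* G}
    (hW : v ∈ autSub (groupP p G)) : v ^ p ^ (t - 1) = 1 := by
  have hexp : ∀ x : G, x ^ p ^ t = 1 := by
    rcases ht with h | h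
    · simpa using fun x => Abelianization.commutator_subset_ker (MonoidHom.id G) (h x)
    · exact fun x => h x (mem_center_iff.mpr fun g => mul_comm g x)
  refine pow_prime_pow_eq_one_of_displacement_pow_eq_one hp hW
    (fun x => mem_center_iff.mpr fun g => mul_comm g _) fun x => ?_
  obtain ⟨z, hz⟩ := exists_pow_of_mem_groupP (MonoidHom.id G) (hW x)
  obtain ⟨q, hq⟩ : p ^ t ∣ p * p ^ (t - 1) := by rw [← pow_succ']; exact pow_dvd_pow p (by omega)
  rw [MonoidHom.id_apply, MonoidHom.id_apply] at hz
  rw [hz, ← pow_mul, hq, pow_mul, hexp, one_pow]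

theorem commutatorElement_pow_left_of_mem_center {x g : G} (h : ⁅x, g⁆ ∈ center G) (n : ℕ) :
    ⁅x ^ n, g⁆ = ⁅x, g⁆ ^ n := by
  have hconj : ∀ n : ℕ, x ^ n * g * (x ^ n)⁻¹ = ⁅x, g⁆ ^ n * g := by
    intro n
    induction n with
    | zero => simp
    | succ n ih =>
      calc x ^ (n + 1) * g * (x ^ (n + 1))⁻¹ = x * (x ^ n * g * (x ^ n)⁻¹) * x⁻¹ := by group
        _ = ⁅x, g⁆ ^ n * (x * g * x⁻¹) := by
          rw [ih, ← mul_assoc, mem_center_iff.mp (pow_mem h n) x]; group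
        _ = ⁅x, g⁆ ^ (n + 1) * g := by
          rw [pow_succ, mul_assoc (⁅x, g⁆ ^ n), commutatorElement_def x g, inv_mul_cancel_right]
  rw [commutatorElement_def (x ^ n), hconj, mul_inv_cancel_right]

theorem pow_eq_one_of_mem_center_quotient_center {n : ℕ} (h : ∀ z ∈ center G, z ^ n = 1) :
    ∀ z ∈ center (G ⧸ center G), z ^ n = 1 := by
  intro z hz
  induction z using QuotientGroup.induction_on with | H x
  have hx : ∀ g : G, ⁅x, g⁆ ∈ center G := fun g => by
    rw [← QuotientGroup.eq_one_iff]
    exact (map_commutatorElement (QuotientGroup.mk' (center G)) x g).trans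
      (commutatorElement_eq_one_iff_mul_comm.mpr (mem_center_iff.mp hz _).symm)
  rw [← QuotientGroup.mk_pow, QuotientGroup.eq_one_iff, mem_center_iff]
  intro g
  have := commutatorElement_pow_left_of_mem_center (hx g) n
  rw [h _ (hx g), commutatorElement_eq_one_iff_mul_comm] at this
  exact this.symm

end Central

universe u

theorem pow_eq_one_of_mem_autSub_groupP {p : ℕ} (hp : p.Prime) {t : ℕ} (c : ℕ) :
    ∀ {G : Type u} [Group G] [Group.IsNilpotent G], Group.nilpotencyClass G ≤ c →
      ((∀ x : G, x ^ p ^ t ∈ commutator G) ∨ ∀ z ∈ Subgroup.center G, z ^ p ^ t = 1) →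
      ∀ v ∈ autSub (groupP p G), v ^ p ^ (t * c - 1) = 1 := by
  induction c with
  | zero =>
    intro G _ _ hc _ v _
    have := Group.nilpotencyClass_zero_iff_subsingleton.mp (Nat.le_zero.mp hc)
    exact MulEquiv.ext fun _ => Subsingleton.elim _ _
  | succ c ih =>
    intro G _ _ hc ht v hv
    by_cases hab : Group.nilpotencyClass G ≤ 1
    · have := Group.IsNilpotent.nilpotencyClass_le_one_iff.mp hab
      have : t ≤ t * (c + 1) := Nat.le_mul_of_pos_right t c.succ_pos
      obtain ⟨q, hq⟩ := pow_dvd_pow p (show t - 1 ≤ t * (c + 1) - 1 by omega)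
      rw [hq, pow_mul, pow_prime_pow_pred_eq_one_of_isMulCommutative hp ht hv, one_pow]
    · have hcq : Group.nilpotencyClass (G ⧸ Subgroup.center G) ≤ c := by
        rw [Group.nilpotencyClass_quotient_center]; omega
      have htq := ht.imp (pow_mem_commutator_quotient (Subgroup.center G))
        pow_eq_one_of_mem_center_quotient_center
      have hZ := ih hcq htq _ (MulAut.quotient_mem_autSub_groupP _ hv)
      rw [← map_pow, ← mem_autSub_iff_quotient_eq_one] at hZ
      have hstep := pow_prime_pow_eq_one_of_mem_autSub_center hp ht (pow_mem hv _) hZ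
      rw [← pow_mul, ← pow_add] at hstep
      convert hstep using 3
      rcases Nat.eq_zero_or_pos t with rfl | ht0
      · simp
      · have := Nat.mul_pos ht0 (show 0 < c by omega)
        rw [mul_add_one]
        omega

section RankQuotient

variable {M : Type*} [CommGroup M] [Finite M]

theorem finrank_additive_le_rank {p : ℕ} [Fact p.Prime] [Module (ZMod p) (Additive M)] :
    Module.finrank (ZMod p) (Additive M) ≤ Group.rank M := by
  obtain ⟨S, hScard, hS⟩ := Group.rank_spec M
  have hcl : AddSubgroup.closure (Additive.toMul ⁻¹' (S : Set M)) = ⊤ := by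
    rw [← Subgroup.toAddSubgroup_closure, hS]
    rfl
  have hspan : Submodule.span (ZMod p)
      ((S.map Additive.ofMul.toEmbedding : Finset (Additive M)) : Set (Additive M)) = ⊤ := by
    refine eq_top_iff.mpr fun a _ => ?_
    refine (AddSubgroup.closure_le (K := (Submodule.span (ZMod p) _).toAddSubgroup)).mpr
      (fun b hb => Submodule.subset_span ?_) (hcl ▸ AddSubgroup.mem_top a)
    simpa using hb
  have := finrank_span_finset_le_card (R := ZMod p) (S.map Additive.ofMul.toEmbedding)
  rwa [Set.finrank, hspan, finrank_top, Finset.card_map, hScard] at this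

theorem iterate_eq_one_of_iterate_eq_one_of_rank_le {p : ℕ} (hp : p.Prime)
    (hexp : ∀ x : M, x ^ p = 1) {d : ℕ} (hd : Group.rank M ≤ d) (f : M →* M) {n : ℕ}
    (hf : ∀ x, f^[n] x = 1) (x : M) : f^[d] x = 1 := by
  have := Fact.mk hp
  -- `letI` would expose the `match` inside `AddCommGroup.zmodModule` and block coercing to functions
  have : Module (ZMod p) (Additive M) := AddCommGroup.zmodModule fun a => hexp a.toMul
  set L : Module.End (ZMod p) (Additive M) := (MonoidHom.toAdditive f).toZModLinearMap p
  have hL : ∀ k (a : Additive M), (L ^ k) a = Additive.ofMul (f^[k] a.toMul) := by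
    intro k
    induction k with
    | zero => exact fun a => rfl
    | succ k ih => intro a; rw [pow_succ, Module.End.mul_apply, ih]; rfl
  have hLn : L ^ n = 0 := LinearMap.ext fun a => by rw [hL, hf]; rfl
  have hLrank : L ^ Module.finrank (ZMod p) (Additive M) = 0 := by
    have := Module.End.ker_pow_le_ker_pow_finrank L n
    rw [hLn, LinearMap.ker_zero] at this
    exact LinearMap.ker_eq_top.mp (top_unique this)
  have := hL d (Additive.ofMul x)
  rw [pow_eq_zero_of_le (finrank_additive_le_rank.trans hd) hLrank] at this
  exact (congrArg Additive.toMul this).symm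

theorem iterate_div_id_eq_one_of_iterate_eq_id {p : ℕ} (hp : p.Prime) (hexp : ∀ x : M, x ^ p = 1)
    {d : ℕ} (hd : Group.rank M ≤ d) (T : M →* M) {m : ℕ} (hT : ∀ x, T^[p ^ m] x = x) (x : M) :
    (T / MonoidHom.id M)^[d] x = 1 := by
  refine iterate_eq_one_of_iterate_eq_one_of_rank_le hp hexp hd _ (n := p ^ m) (fun y => ?_) x
  have h := iterate_apply_eq_mul_binomialProd (MonoidHom.id M) (T / MonoidHom.id M)
    (fun y => (mul_div_cancel y (T y)).symm) (p ^ m) y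
  rw [hT, left_eq_mul, MonoidHom.id_apply, MonoidHom.comp_id] at h
  have := iterate_eq_one_of_binomialProd_eq_one hp hexp _ m _ h
  rwa [← Function.iterate_succ_apply, Nat.succ_eq_add_one,
    Nat.sub_one_add_one_eq_of_pos (pow_pos hp.pos m)] at this

theorem iterate_prime_pow_eq_id_of_exponent_prime {p : ℕ} (hp : p.Prime)
    (hexp : ∀ x : M, x ^ p = 1) {d : ℕ} (hd : Group.rank M ≤ d) (T : M →* M) {m : ℕ}
    (hT : ∀ x, T^[p ^ m] x = x) (x : M) : T^[p ^ (d - 1)] x = x := by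
  have hf := iterate_div_id_eq_one_of_iterate_eq_id hp hexp hd T hT
  rw [iterate_apply_eq_mul_binomialProd (MonoidHom.id M) (T / MonoidHom.id M)
    (fun y => (mul_div_cancel y (T y)).symm), binomialProd_prime_pow_eq_one hp _ (d - 1) _,
    map_one, mul_one]
  intro i
  rw [MonoidHom.comp_id]
  rcases lt_or_ge (i + 1) d with hi | hi
  · obtain ⟨q, hq⟩ := dvd_pow_self p (show d - 1 - i ≠ 0 by omega)
    rw [hq, pow_mul, hexp, one_pow]
  · rw [← Function.iterate_succ_apply, show i.succ = (i + 1 - d) + d by omega,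
      Function.iterate_add_apply, hf, iterate_map_one, one_pow]

theorem exists_sq_eq_iterate_div_id {d : ℕ} (hd : Group.rank M ≤ d) (T : M →* M) {m : ℕ}
    (hT : ∀ x, T^[2 ^ m] x = x) (x : M) : ∃ z, (T / MonoidHom.id M)^[d] x = z ^ 2 := by
  set K := (powMonoidHom 2 : M →* M).range
  set T' := QuotientGroup.map K K T fun _ ⟨z, hz⟩ => ⟨T z, by rw [← hz]; exact (map_pow T z 2).symm⟩
  have hT' : ∀ n (y : M), T'^[n] (y : M ⧸ K) = ((T^[n] y : M) : M ⧸ K) := fun n y =>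
    ((Function.Semiconj.iterate_right (f := ((↑) : M → M ⧸ K)) (fun _ => rfl) n) y).symm
  have hf' : ∀ n (y : M),
      (T' / MonoidHom.id (M ⧸ K))^[n] (y : M ⧸ K) = (((T / MonoidHom.id M)^[n] y : M) : M ⧸ K) :=
    fun n y => ((Function.Semiconj.iterate_right (f := ((↑) : M → M ⧸ K)) (fun _ => rfl) n) y).symm
  have hexp : ∀ q : M ⧸ K, q ^ 2 = 1 := by
    intro q
    induction q using QuotientGroup.induction_on with | H y
    rw [← QuotientGroup.mk_pow, QuotientGroup.eq_one_iff]
    exact ⟨y, rfl⟩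
  have hdK : Group.rank (M ⧸ K) ≤ d :=
    (Group.rank_le_of_surjective _ (QuotientGroup.mk'_surjective K)).trans hd
  have h := iterate_div_id_eq_one_of_iterate_eq_id Nat.prime_two hexp hdK T' (m := m)
    (fun q => by induction q using QuotientGroup.induction_on with | H y => rw [hT', hT]) x
  rw [hf', QuotientGroup.eq_one_iff] at h
  obtain ⟨z, hz⟩ := h
  exact ⟨z, hz.symm⟩

theorem iterate_two_pow_eq_id_of_exponent_four (hexp : ∀ x : M, x ^ 4 = 1) {d : ℕ}
    (hd : Group.rank M ≤ d) (T : M →* M) {m : ℕ} (hT : ∀ x, T^[2 ^ m] x = x) (x : M) :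
    T^[2 ^ (2 * d - 1)] x = x := by
  set f := T / MonoidHom.id M
  have hsq := exists_sq_eq_iterate_div_id hd T hT
  have hf2d : ∀ y, f^[d] (f^[d] y) = 1 := by
    intro y
    obtain ⟨z, hz⟩ := hsq y
    obtain ⟨w, hw⟩ := hsq z
    rw [hz, iterate_map_pow, hw, ← pow_mul]
    exact hexp w
  rw [iterate_apply_eq_mul_binomialProd (MonoidHom.id M) f
    (fun y => (mul_div_cancel y (T y)).symm), binomialProd_prime_pow_eq_one Nat.prime_two _ _ _,
    map_one, mul_one]
  intro i
  rw [MonoidHom.comp_id, ← Function.iterate_succ_apply]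
  rcases lt_or_ge (i + 2) (2 * d) with hi | hi
  · obtain ⟨q, hq⟩ : 4 ∣ 2 ^ (2 * d - 1 - i) := pow_dvd_pow 2 (show 2 ≤ 2 * d - 1 - i by omega)
    rw [hq, pow_mul, hexp, one_pow]
  rcases hi.eq_or_lt with hi | hi
  · obtain ⟨z, hz⟩ := hsq x
    rw [show i.succ = (d - 1) + d by omega, Function.iterate_add_apply, hz, iterate_map_pow,
      show 2 * d - 1 - i = 1 by omega, ← pow_mul]
    exact hexp _
  · rw [show i.succ = (i + 1 - 2 * d) + d + d by omega, Function.iterate_add_apply,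
      Function.iterate_add_apply, hf2d, iterate_map_one, one_pow]

end RankQuotient

open scoped IsMulCommutative in
theorem pow_mem_autSub_groupP_of_pow_eq_one {G : Type*} [Group G] [Finite G] {p : ℕ}
    (hp : p.Prime) {d : ℕ} (hd : Group.rank G ≤ d) {u : G ≃* G} {m : ℕ} (hu : u ^ p ^ m = 1) :
    u ^ p ^ (if p = 2 then 2 * d - 1 else d - 1) ∈ autSub (groupP p G) := by
  rw [mem_autSub_iff_quotient_eq_one, map_pow]
  have : IsMulCommutative (G ⧸ groupP p G) :=
    Subgroup.Normal.quotient_commutative_iff_commutator_le.mpr le_sup_left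
  set T := MulAut.quotient (groupP p G) u
  have hT : ∀ y, (⇑T)^[p ^ m] y = y := by
    intro y
    rw [← MulAut.coe_pow, ← map_pow, hu, map_one, MulAut.one_apply]
  have hdV : Group.rank (G ⧸ groupP p G) ≤ d :=
    (Group.rank_le_of_surjective _ (QuotientGroup.mk'_surjective _)).trans hd
  have hexp : ∀ y : G ⧸ groupP p G, y ^ (if p = 2 then 4 else p) = 1 := by
    intro y
    induction y using QuotientGroup.induction_on with | H x
    rw [← QuotientGroup.mk_pow, QuotientGroup.eq_one_iff]
    exact le_sup_right (a := commutator G) (Subgroup.subset_closure ⟨x, rfl⟩)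
  refine MulEquiv.ext fun y => ?_
  rw [MulAut.coe_pow, MulAut.one_apply]
  split_ifs at hexp ⊢ with hp2
  · subst hp2
    exact iterate_two_pow_eq_id_of_exponent_four hexp hdV T.toMonoidHom hT y
  · exact iterate_prime_pow_eq_id_of_exponent_prime hp hexp hdV T.toMonoidHom hT y

theorem pow_mem_commutator_or_pow_eq_one_of_exponent_eq {G : Type*} [Group G] {p r s : ℕ}
    (hr : Monoid.exponent (G ⧸ commutator G) = p ^ r)
    (hs : Monoid.exponent (Subgroup.center G) = p ^ s) :
    (∀ x : G, x ^ p ^ min r s ∈ commutator G) ∨ ∀ z ∈ Subgroup.center G, z ^ p ^ min r s = 1 := by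
  rcases min_choice r s with h | h <;> rw [h]
  · refine .inl fun x => ?_
    rw [← QuotientGroup.eq_one_iff, QuotientGroup.mk_pow, ← hr]
    exact Monoid.pow_exponent_eq_one _
  · refine .inr fun z hz => ?_
    rw [← hs]
    exact congrArg Subtype.val (Monoid.pow_exponent_eq_one (⟨z, hz⟩ : Subgroup.center G))

theorem Group.nilpotencyClass_eq_zero_or_one_le_rank (G : Type*) [Group G] [Group.IsNilpotent G]
    [Group.FG G] : Group.nilpotencyClass G = 0 ∨ 1 ≤ Group.rank G := by
  refine or_iff_not_imp_left.mpr fun hc => ?_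
  have : Nontrivial G := by
    rwa [← not_subsingleton_iff_nontrivial, ← Group.nilpotencyClass_zero_iff_subsingleton]
  exact Group.rank_pos G

theorem Nat.mul_sub_one_le_sq_mul_sub_self (t c : ℕ) : t * c - 1 ≤ t ^ 2 * c - t := by
  rcases Nat.eq_zero_or_pos (t * c) with h | h
  · simp [h]
  · have ht : 1 ≤ t := Nat.pos_of_mul_pos_right h
    have : t * c + t ≤ t ^ 2 * c + 1 := by nlinarith
    omega

theorem pSubgroup_aut_exponent_le_general (p c r s d : ℕ) (hp : p.Prime) (G : Type*) [Group G] [Finite G]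
    [Group.IsNilpotent G] (hc : Group.nilpotencyClass G = c)
    (hd : Group.rank G ≤ d)
    (hr : Monoid.exponent (G ⧸ commutator G) = p ^ r)
    (hs : Monoid.exponent ↥(Subgroup.center G) = p ^ s)
    (P : Subgroup (G ≃* G)) (hP : IsPGroup p ↥P) :
    Monoid.exponent ↥P ≤
      if p = 2 then p ^ (min r s ^ 2 * c - min r s + 2 * d - 1)
      else p ^ (min r s ^ 2 * c - min r s + d - 1) := by
  have ht := pow_mem_commutator_or_pow_eq_one_of_exponent_eq hr hs
  set t := min r s
  set E := if p = 2 then 2 * d - 1 else d - 1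
  have hkey : ∀ u : P, u ^ p ^ (E + (t * c - 1)) = 1 := by
    intro u
    obtain ⟨m, hm⟩ := hP u
    refine Subtype.ext ?_
    rw [Subgroup.coe_pow, pow_add, pow_mul]
    exact pow_eq_one_of_mem_autSub_groupP hp c hc.le ht _
      (pow_mem_autSub_groupP_of_pow_eq_one hp hd (congrArg Subtype.val hm))
  have hd1 : c = 0 ∨ 1 ≤ d :=
    hc ▸ (Group.nilpotencyClass_eq_zero_or_one_le_rank G).imp_right (·.trans hd)
  refine (Nat.le_of_dvd (pow_pos hp.pos _)
    (Monoid.exponent_dvd_of_forall_pow_eq_one hkey)).trans ?_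
  have := Nat.mul_sub_one_le_sq_mul_sub_self t c
  split_ifs with hp2 <;> refine Nat.pow_le_pow_right hp.pos ?_ <;>
    rcases hd1 with rfl | hd1 <;> simp only [E, hp2, if_true, if_false] <;> omega

/-- **Theorem C (second part).** Let `G` be a finite `p`-group of class `c` generated by `d`
elements, and `t = min r s` where `exp(G/[G,G]) = p ^ r` and `exp(Z(G)) = p ^ s`. Then for every
`p`-subgroup `P` of `Aut(G)`, `exp(P) ≤ p ^ (t²c - t + d - 1)` if `p > 2`, and
`exp(P) ≤ p ^ (t²c - t + 2d - 1)` if `p = 2`. -/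
theorem pSubgroup_aut_exponent_le (p c r s d : ℕ) (hp : p.Prime) (G : Type*) [Group G] [Finite G]
    (hG : IsPGroup p G) [Group.IsNilpotent G] (hc : Group.nilpotencyClass G = c)
    (hd : Group.rank G ≤ d)
    (hr : Monoid.exponent (G ⧸ commutator G) = p ^ r)
    (hs : Monoid.exponent ↥(Subgroup.center G) = p ^ s)
    (P : Subgroup (G ≃* G)) (hP : IsPGroup p ↥P) :
    Monoid.exponent ↥P ≤
      if p = 2 then p ^ (min r s ^ 2 * c - min r s + 2 * d - 1)
      else p ^ (min r s ^ 2 * c - min r s + d - 1) :=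
  pSubgroup_aut_exponent_le_general p c r s d hp G hc hd hr hs P hP
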